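/- arXiv:2111.04059 — 7 statements merged into one kernel-verified Lean document; each statement's English description precedes it below -/
import Mathlib

section
/- With M_k the Markov parameter matrix as defined, dim(ker M_{k+1}) ≥ dim(ker M_k) for all k ∈ ℕ. -/
open Matrix

noncomputable def Markov {n m p : ℕ} (A : Matrix (Fin n) (Fin n) ℝ) (B : Matrix (Fin n) (Fin m) ℝ)
    (C : Matrix (Fin p) (Fin n) ℝ) (D : Matrix (Fin p) (Fin m) ℝ) (k : ℕ) :
    Matrix (Fin k × Fin p) (Fin k × Fin m) ℝ :=
  fun ir jc =>
    if (ir.1 : ℕ) + (jc.1 : ℕ) + 1 < k then 0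
    else if (ir.1 : ℕ) + (jc.1 : ℕ) + 1 = k then D ir.2 jc.2
    else (C * A ^ ((ir.1 : ℕ) + (jc.1 : ℕ) - k) * B) ir.2 jc.2

lemma markov_succ_succ {n m p : ℕ} (A : Matrix (Fin n) (Fin n) ℝ) (B : Matrix (Fin n) (Fin m) ℝ)
    (C : Matrix (Fin p) (Fin n) ℝ) (D : Matrix (Fin p) (Fin m) ℝ) (k : ℕ)
    (i : Fin k) (r : Fin p) (j : Fin k) (c : Fin m) :
    Markov A B C D (k + 1) (i.succ, r) (j.castSucc, c) = Markov A B C D k (i, r) (j, c) := by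
  unfold Markov
  simp only [Fin.val_succ, Fin.coe_castSucc]
  rw [show (i : ℕ) + 1 + (j : ℕ) - (k + 1) = (i : ℕ) + (j : ℕ) - k by omega]
  split_ifs <;> first | rfl | omega

lemma markov_zero_row {n m p : ℕ} (A : Matrix (Fin n) (Fin n) ℝ) (B : Matrix (Fin n) (Fin m) ℝ)
    (C : Matrix (Fin p) (Fin n) ℝ) (D : Matrix (Fin p) (Fin m) ℝ) (k : ℕ)
    (r : Fin p) (j : Fin k) (c : Fin m) :
    Markov A B C D (k + 1) ((0 : Fin (k + 1)), r) (j.castSucc, c) = 0 := by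
  unfold Markov
  rw [if_pos]
  simp only [Fin.val_zero, Fin.coe_castSucc]
  omega

/-- `dim ker M_{k+1} ≥ dim ker M_k` for all `k ∈ ℕ`. -/
theorem kernel_dim_mono {n m p : ℕ} (A : Matrix (Fin n) (Fin n) ℝ)
    (B : Matrix (Fin n) (Fin m) ℝ) (C : Matrix (Fin p) (Fin n) ℝ)
    (D : Matrix (Fin p) (Fin m) ℝ) (k : ℕ) :
    Module.finrank ℝ (LinearMap.ker (Markov A B C D k).mulVecLin) ≤
      Module.finrank ℝ (LinearMap.ker (Markov A B C D (k + 1)).mulVecLin) := by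
  classical
  let φ : (Fin k × Fin m → ℝ) →ₗ[ℝ] (Fin (k + 1) × Fin m → ℝ) :=
    { toFun := fun x jc => if h : (jc.1 : ℕ) < k then x (⟨jc.1, h⟩, jc.2) else 0
      map_add' := by
        intro x y; funext jc; by_cases h : (jc.1 : ℕ) < k <;> simp [h]
      map_smul' := by
        intro a x; funext jc; by_cases h : (jc.1 : ℕ) < k <;> simp [h] }
  have hφ : ∀ (x : Fin k × Fin m → ℝ) (j : Fin k) (c : Fin m),
      φ x (j.castSucc, c) = x (j, c) := by
    intro x j c
    have h : ((j.castSucc : Fin (k+1)) : ℕ) < k := j.isLt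
    simp only [φ, LinearMap.coe_mk, AddHom.coe_mk, dif_pos h]
    congr 1
  have hφlast : ∀ (x : Fin k × Fin m → ℝ) (c : Fin m), φ x (Fin.last k, c) = 0 := by
    intro x c
    simp [φ, Fin.last]
  have hker : ∀ x ∈ LinearMap.ker (Markov A B C D k).mulVecLin,
      φ x ∈ LinearMap.ker (Markov A B C D (k + 1)).mulVecLin := by
    intro x hx
    rw [LinearMap.mem_ker, mulVecLin_apply] at hx ⊢
    funext ir
    obtain ⟨i, r⟩ := ir
    have key : ∀ i' : Fin (k+1), (Markov A B C D (k+1)).mulVec (φ x) (i', r) =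
        ∑ j : Fin k, ∑ c : Fin m,
          Markov A B C D (k+1) (i', r) (j.castSucc, c) * x (j, c) := by
      intro i'
      rw [Matrix.mulVec, dotProduct]
      rw [Fintype.sum_prod_type]
      rw [Fin.sum_univ_castSucc]
      simp only [hφlast, mul_zero, Finset.sum_const_zero, add_zero]
      congr 1
      funext j
      congr 1
      funext c
      rw [hφ]
    induction i using Fin.cases with
    | zero =>
      rw [Pi.zero_apply, key]
      simp [markov_zero_row]
    | succ i =>
      rw [Pi.zero_apply, key]
      have := congrFun hx (i, r)
      rw [Matrix.mulVec, dotProduct, Fintype.sum_prod_type, Pi.zero_apply] at this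
      calc ∑ j : Fin k, ∑ c : Fin m,
            Markov A B C D (k+1) (i.succ, r) (j.castSucc, c) * x (j, c)
          = ∑ j : Fin k, ∑ c : Fin m, Markov A B C D k (i, r) (j, c) * x (j, c) := by
            simp_rw [markov_succ_succ]
        _ = 0 := this
  have hinj : Function.Injective (φ.restrict hker) := by
    intro x y hxy
    ext jc
    obtain ⟨j, c⟩ := jc
    have h := congrFun (congrArg Subtype.val hxy) (j.castSucc, c)
    simpa [LinearMap.restrict_apply, hφ] using h
  exact LinearMap.finrank_le_finrank_of_injective hinj
end

section
/- With M_k the Markov parameter matrix as defined, if dim(ker M_i) = dim(ker M_{i+1}) = r for some i ∈ ℕ, then dim(ker M_k) = r for all k ≥ i. -/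
open Matrix

namespace MarkovAux

variable {n m p : ℕ} (A : Matrix (Fin n) (Fin n) ℝ) (B : Matrix (Fin n) (Fin m) ℝ)
    (C : Matrix (Fin p) (Fin n) ℝ) (D : Matrix (Fin p) (Fin m) ℝ)

lemma markov_succ_castSucc (k : ℕ) (r c : Fin k) (a : Fin p) (b : Fin m) :
    Markov A B C D (k+1) (r.succ, a) (c.castSucc, b) = Markov A B C D k (r, a) (c, b) := by
  simp only [Markov, Fin.val_succ, Fin.coe_castSucc]
  have h3 : (r:ℕ)+1+(c:ℕ)-(k+1) = (r:ℕ)+(c:ℕ)-k := by omega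
  by_cases h : (r:ℕ)+(c:ℕ)+1 < k
  · rw [if_pos (by omega), if_pos h]
  · by_cases h2 : (r:ℕ)+(c:ℕ)+1 = k
    · rw [if_neg (by omega), if_pos (by omega), if_neg h, if_pos h2]
    · rw [if_neg (by omega), if_neg (by omega), if_neg h, if_neg h2, h3]

lemma markov_castSucc_succ (k : ℕ) (r c : Fin k) (a : Fin p) (b : Fin m) :
    Markov A B C D (k+1) (r.castSucc, a) (c.succ, b) = Markov A B C D k (r, a) (c, b) := by
  simp only [Markov, Fin.val_succ, Fin.coe_castSucc]
  have h3 : (r:ℕ)+((c:ℕ)+1)-(k+1) = (r:ℕ)+(c:ℕ)-k := by omega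
  by_cases h : (r:ℕ)+(c:ℕ)+1 < k
  · rw [if_pos (by omega), if_pos h]
  · by_cases h2 : (r:ℕ)+(c:ℕ)+1 = k
    · rw [if_neg (by omega), if_pos (by omega), if_neg h, if_pos h2]
    · rw [if_neg (by omega), if_neg (by omega), if_neg h, if_neg h2, h3]

lemma markov_zero_castSucc (k : ℕ) (c : Fin k) (a : Fin p) (b : Fin m) :
    Markov A B C D (k+1) ((0 : Fin (k+1)), a) (c.castSucc, b) = 0 := by
  simp only [Markov]
  rw [if_pos]
  simp only [Fin.val_zero, Fin.coe_castSucc]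
  omega

lemma markov_castSucc_zero (k : ℕ) (r : Fin k) (a : Fin p) (b : Fin m) :
    Markov A B C D (k+1) (r.castSucc, a) ((0 : Fin (k+1)), b) = 0 := by
  simp only [Markov]
  rw [if_pos]
  simp only [Fin.val_zero, Fin.coe_castSucc]
  omega

/-- Append a zero block at the last column index. -/
noncomputable def extMap (m k : ℕ) : ((Fin k × Fin m) → ℝ) →ₗ[ℝ] ((Fin (k+1) × Fin m) → ℝ) where
  toFun x := fun cb => if h : (cb.1 : ℕ) < k then x (⟨cb.1, h⟩, cb.2) else 0
  map_add' x y := by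
    funext cb
    by_cases h : (cb.1 : ℕ) < k <;> simp [h]
  map_smul' c x := by
    funext cb
    by_cases h : (cb.1 : ℕ) < k <;> simp [h]

lemma extMap_castSucc (k : ℕ) (x : (Fin k × Fin m) → ℝ) (c : Fin k) (b : Fin m) :
    extMap m k x (c.castSucc, b) = x (c, b) := by
  simp [extMap]

lemma extMap_last (k : ℕ) (x : (Fin k × Fin m) → ℝ) (b : Fin m) :
    extMap m k x (Fin.last k, b) = 0 := by
  simp [extMap]

lemma extMap_injective (k : ℕ) : Function.Injective (extMap m k) := by
  intro x y h
  funext cb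
  obtain ⟨c, b⟩ := cb
  have := congrFun h (c.castSucc, b)
  rwa [extMap_castSucc, extMap_castSucc] at this

lemma mem_ker_iff (k : ℕ) (x : (Fin k × Fin m) → ℝ) :
    x ∈ LinearMap.ker (Markov A B C D k).mulVecLin ↔
      ∀ r : Fin k, ∀ a : Fin p,
        ∑ c : Fin k, ∑ b : Fin m, Markov A B C D k (r, a) (c, b) * x (c, b) = 0 := by
  rw [LinearMap.mem_ker, mulVecLin_apply]
  constructor
  · intro h r a
    have := congrFun h (r, a)
    simpa [Matrix.mulVec, dotProduct, Fintype.sum_prod_type] using this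
  · intro h
    funext ra
    obtain ⟨r, a⟩ := ra
    simpa [Matrix.mulVec, dotProduct, Fintype.sum_prod_type] using h r a

lemma ext_mem (k : ℕ) (x : (Fin k × Fin m) → ℝ)
    (hx : x ∈ LinearMap.ker (Markov A B C D k).mulVecLin) :
    extMap m k x ∈ LinearMap.ker (Markov A B C D (k+1)).mulVecLin := by
  rw [mem_ker_iff] at hx ⊢
  intro r a
  rw [Fin.sum_univ_castSucc]
  have hlast : ∑ b : Fin m, Markov A B C D (k+1) (r, a) (Fin.last k, b) *
      extMap m k x (Fin.last k, b) = 0 := by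
    simp [extMap_last]
  rw [hlast, add_zero]
  induction r using Fin.cases with
  | zero =>
    apply Finset.sum_eq_zero
    intro c _
    apply Finset.sum_eq_zero
    intro b _
    rw [markov_zero_castSucc, zero_mul]
  | succ r =>
    have := hx r a
    calc ∑ c : Fin k, ∑ b : Fin m,
          Markov A B C D (k+1) (r.succ, a) (c.castSucc, b) * extMap m k x (c.castSucc, b)
        = ∑ c : Fin k, ∑ b : Fin m, Markov A B C D k (r, a) (c, b) * x (c, b) := by
          apply Finset.sum_congr rfl; intro c _
          apply Finset.sum_congr rfl; intro b _
          rw [markov_succ_castSucc, extMap_castSucc]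
      _ = 0 := this

lemma restrict_mem (k : ℕ) (y : (Fin (k+1) × Fin m) → ℝ)
    (hy : y ∈ LinearMap.ker (Markov A B C D (k+1)).mulVecLin)
    (hlast : ∀ b : Fin m, y (Fin.last k, b) = 0) :
    (fun cb : Fin k × Fin m => y (cb.1.castSucc, cb.2)) ∈
      LinearMap.ker (Markov A B C D k).mulVecLin := by
  rw [mem_ker_iff] at hy ⊢
  intro r a
  have := hy r.succ a
  rw [Fin.sum_univ_castSucc] at this
  have hl : ∑ b : Fin m, Markov A B C D (k+1) (r.succ, a) (Fin.last k, b) *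
      y (Fin.last k, b) = 0 := by
    apply Finset.sum_eq_zero
    intro b _
    rw [hlast b, mul_zero]
  rw [hl, add_zero] at this
  calc ∑ c : Fin k, ∑ b : Fin m, Markov A B C D k (r, a) (c, b) * y (c.castSucc, b)
      = ∑ c : Fin k, ∑ b : Fin m,
          Markov A B C D (k+1) (r.succ, a) (c.castSucc, b) * y (c.castSucc, b) := by
        apply Finset.sum_congr rfl; intro c _
        apply Finset.sum_congr rfl; intro b _
        rw [markov_succ_castSucc]
    _ = 0 := this

lemma ext_restrict (k : ℕ) (y : (Fin (k+1) × Fin m) → ℝ)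
    (hlast : ∀ b : Fin m, y (Fin.last k, b) = 0) :
    extMap m k (fun cb : Fin k × Fin m => y (cb.1.castSucc, cb.2)) = y := by
  funext cb
  obtain ⟨c, b⟩ := cb
  rcases Fin.eq_castSucc_or_eq_last c with ⟨c', rfl⟩ | rfl
  · rw [extMap_castSucc]
  · rw [extMap_last, hlast b]

lemma shift_mem (k : ℕ) (y : (Fin (k+1) × Fin m) → ℝ)
    (hy : y ∈ LinearMap.ker (Markov A B C D (k+1)).mulVecLin) :
    (fun cb : Fin k × Fin m => y (cb.1.succ, cb.2)) ∈
      LinearMap.ker (Markov A B C D k).mulVecLin := by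
  rw [mem_ker_iff] at hy ⊢
  intro r a
  have := hy r.castSucc a
  rw [Fin.sum_univ_succ] at this
  have h0 : ∑ b : Fin m, Markov A B C D (k+1) (r.castSucc, a) ((0 : Fin (k+1)), b) *
      y ((0 : Fin (k+1)), b) = 0 := by
    apply Finset.sum_eq_zero
    intro b _
    rw [markov_castSucc_zero, zero_mul]
  rw [h0, zero_add] at this
  calc ∑ c : Fin k, ∑ b : Fin m, Markov A B C D k (r, a) (c, b) * y (c.succ, b)
      = ∑ c : Fin k, ∑ b : Fin m,
          Markov A B C D (k+1) (r.castSucc, a) (c.succ, b) * y (c.succ, b) := by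
        apply Finset.sum_congr rfl; intro c _
        apply Finset.sum_congr rfl; intro b _
        rw [markov_castSucc_succ]
    _ = 0 := this

end MarkovAux

/-- If `dim ker M_i = dim ker M_{i+1} = r` for some `i`, then `dim ker M_k = r`
for all `k ≥ i`. -/
theorem kernel_dim_stabilizes {n m p : ℕ} (A : Matrix (Fin n) (Fin n) ℝ)
    (B : Matrix (Fin n) (Fin m) ℝ) (C : Matrix (Fin p) (Fin n) ℝ)
    (D : Matrix (Fin p) (Fin m) ℝ) (i r : ℕ)
    (hi : Module.finrank ℝ (LinearMap.ker (Markov A B C D i).mulVecLin) = r)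
    (hi1 : Module.finrank ℝ (LinearMap.ker (Markov A B C D (i + 1)).mulVecLin) = r) :
    ∀ k, i ≤ k → Module.finrank ℝ (LinearMap.ker (Markov A B C D k).mulVecLin) = r := by
  open MarkovAux in
  -- the restricted append map on kernels
  have key : ∀ k, i ≤ k →
      Module.finrank ℝ (LinearMap.ker (Markov A B C D k).mulVecLin) = r ∧
      (∀ y ∈ LinearMap.ker (Markov A B C D (k+1)).mulVecLin,
        ∀ b : Fin m, y (Fin.last k, b) = 0) := by
    intro k hk
    induction k, hk using Nat.le_induction with
    | base =>
      refine ⟨hi, ?_⟩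
      -- the restricted ext map ker M_i → ker M_{i+1} is injective with equal finrank,
      -- hence surjective
      set f := (MarkovAux.extMap m i).restrict
        (p := LinearMap.ker (Markov A B C D i).mulVecLin)
        (q := LinearMap.ker (Markov A B C D (i+1)).mulVecLin)
        (fun x hx => MarkovAux.ext_mem A B C D i x hx) with hf
      have finj : Function.Injective f := by
        intro a b hab
        exact Subtype.ext (MarkovAux.extMap_injective i
          (congrArg Subtype.val hab))
      have fsurj : Function.Surjective f :=
        (LinearMap.injective_iff_surjective_of_finrank_eq_finrank
          (by rw [hi, hi1])).mp finj
      intro y hy b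
      obtain ⟨⟨x, hx⟩, hxy⟩ := fsurj ⟨y, hy⟩
      have : MarkovAux.extMap m i x = y := congrArg Subtype.val hxy
      rw [← this, MarkovAux.extMap_last]
    | succ k hk ih =>
      obtain ⟨ihrank, ihlast⟩ := ih
      -- bijective ext map ker M_k → ker M_{k+1}
      set f := (MarkovAux.extMap m k).restrict
        (p := LinearMap.ker (Markov A B C D k).mulVecLin)
        (q := LinearMap.ker (Markov A B C D (k+1)).mulVecLin)
        (fun x hx => MarkovAux.ext_mem A B C D k x hx) with hf
      have finj : Function.Injective f := by
        intro a b hab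
        exact Subtype.ext (MarkovAux.extMap_injective k
          (congrArg Subtype.val hab))
      have fsurj : Function.Surjective f := by
        rintro ⟨y, hy⟩
        have hlast := ihlast y hy
        refine ⟨⟨fun cb => y (cb.1.castSucc, cb.2),
          MarkovAux.restrict_mem A B C D k y hy hlast⟩, ?_⟩
        exact Subtype.ext (MarkovAux.ext_restrict k y hlast)
      have e : (LinearMap.ker (Markov A B C D k).mulVecLin) ≃ₗ[ℝ]
          (LinearMap.ker (Markov A B C D (k+1)).mulVecLin) :=
        LinearEquiv.ofBijective f ⟨finj, fsurj⟩
      refine ⟨by rw [← e.finrank_eq, ihrank], ?_⟩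
      intro z hz b
      have hshift := MarkovAux.shift_mem A B C D (k+1) z hz
      have := ihlast _ hshift b
      simpa [Fin.succ_last] using this
  intro k hk
  exact (key k hk).1
end

section
/- Let G(s) be a proper real rational matrix (each entry has numerator degree at most denominator degree) and let U(s) = Σ_{i=0}^{k} u_i s^i be a vector polynomial with u_k ≠ 0. If G(s)U(s) is strictly proper, then G(s)·Ũ(s) is strictly proper, where Ũ(s) = Σ_{i=1}^{k} u_i s^{i-1}. -/
open Matrix Polynomial

/-- A rational function is strictly proper if its numerator degree is
strictly less than its denominator degree. -/
def StrictlyProper (r : RatFunc ℝ) : Prop := r.num.degree < r.denom.degree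

/-- A rational function is proper if its numerator degree is at most its denominator degree. -/
def ProperRF (r : RatFunc ℝ) : Prop := r.num.degree ≤ r.denom.degree

/-!
Properness is `v r ≤ 1` and strict properness is `v r < 1` for the valuation `v` at infinity,
`v r = exp (deg r.num - deg r.denom)`. Splitting off the constant term,
`U = X • Ũ + u₀`, so `G U = X • (G Ũ) + G u₀`. Here `v (G u₀) ≤ 1` because `G` is proper and
`u₀` is constant, hence `v (X • G Ũ) ≤ 1`, and since `v X = exp 1` this forces `v (G Ũ) < 1`.
-/

section

open scoped Classical

theorem properRF_iff_inftyValuation_le_one (r : RatFunc ℝ) :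
    ProperRF r ↔ RatFunc.inftyValuation ℝ r ≤ 1 := by
  rcases eq_or_ne r 0 with rfl | hr
  · simp [ProperRF]
  rw [ProperRF, degree_eq_natDegree (RatFunc.num_ne_zero hr),
    degree_eq_natDegree r.denom_ne_zero, Nat.cast_le, RatFunc.inftyValuation_apply,
    RatFunc.inftyValuation_of_nonzero _ hr, ← WithZero.exp_zero, WithZero.exp_le_exp,
    RatFunc.intDegree]
  omega

theorem strictlyProper_iff_inftyValuation_lt_one (r : RatFunc ℝ) :
    StrictlyProper r ↔ RatFunc.inftyValuation ℝ r < 1 := by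
  rcases eq_or_ne r 0 with rfl | hr
  · simp [StrictlyProper]
  rw [StrictlyProper, degree_eq_natDegree (RatFunc.num_ne_zero hr),
    degree_eq_natDegree r.denom_ne_zero, Nat.cast_lt, RatFunc.inftyValuation_apply,
    RatFunc.inftyValuation_of_nonzero _ hr, ← WithZero.exp_zero, WithZero.exp_lt_exp,
    RatFunc.intDegree]
  omega

theorem RatFunc.inftyValuation_algebraMap_C_le_one {F : Type*} [Field F] (c : F) :
    inftyValuation F (algebraMap F[X] (RatFunc F) (Polynomial.C c)) ≤ 1 := by
  rw [← Polynomial.algebraMap_eq, ← IsScalarTower.algebraMap_apply]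
  exact Valuation.IsTrivialOn.valuation_algebraMap_le_one _ c

theorem RatFunc.inftyValuation_lt_one_of_X_mul_add {F : Type*} [Field F] {a b : RatFunc F}
    (hsum : inftyValuation F (X * a + b) < 1) (hb : inftyValuation F b ≤ 1) :
    inftyValuation F a < 1 := by
  have hXa : inftyValuation F (X * a) ≤ 1 := by
    simpa using (inftyValuation F).map_sub_le hsum.le hb
  rw [map_mul, inftyValuation.X] at hXa
  calc inftyValuation F a
        = WithZero.exp (-1 : ℤ) * (WithZero.exp 1 * inftyValuation F a) := by
          rw [← mul_assoc, ← WithZero.exp_add]; simp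
    _ ≤ WithZero.exp (-1 : ℤ) * 1 := by gcongr
    _ < 1 := by rw [mul_one, ← WithZero.exp_zero, WithZero.exp_lt_exp]; norm_num

end

theorem Polynomial.sum_fin_succ_C_mul_X_pow {R : Type*} [CommSemiring R] {k : ℕ}
    (u : Fin (k + 1) → R) :
    ∑ l : Fin (k + 1), C (u l) * X ^ (l : ℕ) =
      X * ∑ l : Fin k, C (u l.succ) * X ^ (l : ℕ) + C (u 0) := by
  rw [Fin.sum_univ_succ, Finset.mul_sum, add_comm]
  simp only [Fin.val_zero, pow_zero, mul_one, Fin.val_succ, pow_succ]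
  congr 1
  exact Finset.sum_congr rfl fun l _ => by ring

theorem Valuation.map_mulVec_le_one {K Γ₀ : Type*} [Ring K]
    [LinearOrderedCommMonoidWithZero Γ₀] (v : Valuation K Γ₀) {m n : Type*} [Fintype n]
    {A : Matrix m n K} {w : n → K} (hA : ∀ i j, v (A i j) ≤ 1) (hw : ∀ j, v (w j) ≤ 1)
    (i : m) : v ((A *ᵥ w) i) ≤ 1 :=
  v.map_sum_le fun j _ => by simpa using mul_le_one' (hA i j) (hw j)

theorem strictly_proper_shift_general {p m k : ℕ} (G : Matrix (Fin p) (Fin m) (RatFunc ℝ))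
    (hG : ∀ i j, ProperRF (G i j)) (u : Fin (k + 1) → Fin m → ℝ)
    (hGU : ∀ i, StrictlyProper
      ((G.mulVec fun j => algebraMap (Polynomial ℝ) (RatFunc ℝ)
        (∑ l : Fin (k + 1), Polynomial.C (u l j) * Polynomial.X ^ (l : ℕ))) i)) :
    ∀ i, StrictlyProper
      ((G.mulVec fun j => algebraMap (Polynomial ℝ) (RatFunc ℝ)
        (∑ l : Fin k, Polynomial.C (u l.succ j) * Polynomial.X ^ (l : ℕ))) i) := by
  classical
  set u₀ : Fin m → RatFunc ℝ := fun j => algebraMap ℝ[X] (RatFunc ℝ) (Polynomial.C (u 0 j))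
  have hsplit : (fun j => algebraMap ℝ[X] (RatFunc ℝ)
      (∑ l : Fin (k + 1), Polynomial.C (u l j) * Polynomial.X ^ (l : ℕ))) =
      (RatFunc.X : RatFunc ℝ) • (fun j => algebraMap ℝ[X] (RatFunc ℝ)
        (∑ l : Fin k, Polynomial.C (u l.succ j) * Polynomial.X ^ (l : ℕ))) + u₀ := by
    ext j
    simp [u₀, Polynomial.sum_fin_succ_C_mul_X_pow fun l => u l j, RatFunc.algebraMap_X]
  have hGu₀ : ∀ i, RatFunc.inftyValuation ℝ ((G *ᵥ u₀) i) ≤ 1 :=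
    (RatFunc.inftyValuation ℝ).map_mulVec_le_one
      (fun i j => (properRF_iff_inftyValuation_le_one _).1 (hG i j))
      fun j => RatFunc.inftyValuation_algebraMap_C_le_one (u 0 j)
  intro i
  rw [strictlyProper_iff_inftyValuation_lt_one]
  refine RatFunc.inftyValuation_lt_one_of_X_mul_add ?_ (hGu₀ i)
  have := (strictlyProper_iff_inftyValuation_lt_one _).1 (hGU i)
  rwa [hsplit, mulVec_add, mulVec_smul] at this

/-- If `G(s)` is proper and `G(s)U(s)` is strictly proper with
`U(s) = Σ_{i=0}^k u_i s^i`, `u_k ≠ 0`, then `G(s)Ũ(s)` is strictly proper,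
where `Ũ(s) = Σ_{i=1}^k u_i s^{i-1}`. -/
theorem strictly_proper_shift {p m k : ℕ} (G : Matrix (Fin p) (Fin m) (RatFunc ℝ))
    (hG : ∀ i j, ProperRF (G i j)) (u : Fin (k + 1) → Fin m → ℝ)
    (hu : u (Fin.last k) ≠ 0)
    (hGU : ∀ i, StrictlyProper
      ((G.mulVec fun j => algebraMap (Polynomial ℝ) (RatFunc ℝ)
        (∑ l : Fin (k + 1), Polynomial.C (u l j) * Polynomial.X ^ (l : ℕ))) i)) :
    ∀ i, StrictlyProper
      ((G.mulVec fun j => algebraMap (Polynomial ℝ) (RatFunc ℝ)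
        (∑ l : Fin k, Polynomial.C (u l.succ j) * Polynomial.X ^ (l : ℕ))) i) :=
  strictly_proper_shift_general G hG u hGU
end

section
/- Let V be a subspace of ℝ^n and F ∈ ℝ^{m×n} a feedback such that (A+BF)V ⊆ V and (C+DF)V = 0. Then every x_0 ∈ V is weakly unobservable: with the smooth input u(t) = F e^{(A+BF)t} x_0, the state trajectory from x_0 stays in V and the output y(t; x_0, u) is identically zero for t ≥ 0. -/
/-!
The closed-loop trajectory `x(t) = e^{t(A+BF)} x₀` satisfies `ẋ = (A+BF)x = Ax + Bu`. Since `V` is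
invariant under `A+BF`, it is invariant under every power of `t(A+BF)`, hence (being closed) under
the exponential series, so `x(t) ∈ V`; then `y(t) = (C+DF)x(t) = 0`.
-/

open Matrix NormedSpace

namespace Submodule

variable {ι R : Type*} [Fintype ι] [DecidableEq ι] [CommRing R]

def matrixStabilizer (V : Submodule R (ι → R)) : Subalgebra R (Matrix ι ι R) where
  carrier := {N | ∀ v ∈ V, N *ᵥ v ∈ V}
  mul_mem' hM hN v hv := by
    rw [← mulVec_mulVec]
    exact hM _ (hN v hv)
  add_mem' hM hN v hv := by
    rw [add_mulVec]
    exact V.add_mem (hM v hv) (hN v hv)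
  algebraMap_mem' r v hv := by
    rw [Algebra.algebraMap_eq_smul_one, smul_mulVec, one_mulVec]
    exact V.smul_mem r hv

theorem isClosed_matrixStabilizer [TopologicalSpace R] [IsTopologicalRing R]
    {V : Submodule R (ι → R)} (hV : IsClosed (V : Set (ι → R))) :
    IsClosed (V.matrixStabilizer : Set (Matrix ι ι R)) := by
  have : (V.matrixStabilizer : Set (Matrix ι ι R)) = ⋂ v ∈ V, (· *ᵥ v) ⁻¹' V := by
    ext N
    simp [matrixStabilizer]
  rw [this]
  exact isClosed_biInter fun v _ => hV.preimage (continuous_id.matrix_mulVec continuous_const)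

end Submodule

namespace Matrix

variable {ι : Type*} [Fintype ι] [DecidableEq ι]

theorem exp_mulVec_mem {R : Type*} [CommRing R] [TopologicalSpace R] [IsTopologicalRing R]
    [Algebra ℚ R] {V : Submodule R (ι → R)} (hV : IsClosed (V : Set (ι → R)))
    {M : Matrix ι ι R} (hM : ∀ v ∈ V, M *ᵥ v ∈ V) {v : ι → R} (hv : v ∈ V) :
    exp M *ᵥ v ∈ V :=
  exp_mem (R := R) (s := V.matrixStabilizer) (Submodule.isClosed_matrixStabilizer hV) hM v hv

section LinftyOp

-- `exp` does not depend on the norm; any algebra norm gives access to the derivative of `exp`.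
attribute [local instance] Matrix.linftyOpNormedRing Matrix.linftyOpNormedAlgebra

theorem hasDerivAt_exp_smul_mulVec {𝕂 : Type*} [RCLike 𝕂] (M : Matrix ι ι 𝕂) (v : ι → 𝕂)
    (t : 𝕂) : HasDerivAt (fun s : 𝕂 => exp (s • M) *ᵥ v) (M *ᵥ (exp (t • M) *ᵥ v)) t := by
  let L := ((mulVecBilin 𝕂 𝕂 (m := ι) (n := ι)).flip v).toContinuousLinearMap
  have hcomm : M * exp (t • M) = exp (t • M) * M := ((Commute.refl M).smul_right t).exp_right
  rw [mulVec_mulVec, hcomm]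
  exact L.hasFDerivAt.comp_hasDerivAt t (hasDerivAt_exp_smul_const M t)

end LinftyOp

end Matrix

/-- If `V` is a subspace with a feedback `F` such that `(A+BF)V ⊆ V` and
`(C+DF)V = 0`, then every `x₀ ∈ V` is weakly unobservable: with the smooth
input `u(t) = F e^{(A+BF)t} x₀`, the state trajectory
`x(t) = e^{(A+BF)t} x₀` from `x₀` solves `ẋ = Ax + Bu`, stays in `V`, and the
output `y(t) = Cx(t) + Du(t)` is identically zero for `t ≥ 0`. -/
theorem weakly_unobservable_of_invariant {n m p : ℕ}
    (A : Matrix (Fin n) (Fin n) ℝ) (B : Matrix (Fin n) (Fin m) ℝ)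
    (C : Matrix (Fin p) (Fin n) ℝ) (D : Matrix (Fin p) (Fin m) ℝ)
    (V : Submodule ℝ (Fin n → ℝ)) (F : Matrix (Fin m) (Fin n) ℝ)
    (hinv : ∀ v ∈ V, (A + B * F).mulVec v ∈ V)
    (hout : ∀ v ∈ V, (C + D * F).mulVec v = 0)
    (x₀ : Fin n → ℝ) (hx₀ : x₀ ∈ V) :
    let x : ℝ → Fin n → ℝ := fun t => (NormedSpace.exp (t • (A + B * F))).mulVec x₀
    let u : ℝ → Fin m → ℝ := fun t => F.mulVec (x t)
    (∀ t : ℝ, HasDerivAt x (A.mulVec (x t) + B.mulVec (u t)) t) ∧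
    (x 0 = x₀) ∧
    (∀ t : ℝ, x t ∈ V) ∧
    (∀ t : ℝ, 0 ≤ t → C.mulVec (x t) + D.mulVec (u t) = 0) := by
  intro x u
  have hx_mem (t : ℝ) : x t ∈ V := by
    refine exp_mulVec_mem V.closed_of_finiteDimensional (fun v hv => ?_) hx₀
    rw [smul_mulVec]
    exact V.smul_mem t (hinv v hv)
  refine ⟨fun t => ?_, by simp [x], hx_mem, fun t _ => ?_⟩
  · simpa only [add_mulVec, ← mulVec_mulVec] using hasDerivAt_exp_smul_mulVec (A + B * F) x₀ t
  · simpa only [add_mulVec, ← mulVec_mulVec] using hout _ (hx_mem t)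
end

section
/- Consider the recursion R_0 = {0}, R_{i+1} = [A B]·{(w,α) : w ∈ R_i, Cw + Dα = 0} for the strongly reachable subspace. For every i ≥ 1, R_i equals the image of the matrix [B AB ... A^{i-1}B]·N̂_i, where the columns of N̂_i form a basis of ker M_i, the kernel of the i-th Markov parameter matrix. Equivalently, R_i = { [B AB ... A^{i-1}B] v : v ∈ ker M_i }. -/
open Matrix

/-- The recursion computing the strongly reachable subspace:
`R₀ = {0}`, `R_{i+1} = [A B]·{(w,α) : w ∈ Rᵢ, Cw + Dα = 0}`. -/
def strongRec {n m p : ℕ} (A : Matrix (Fin n) (Fin n) ℝ) (B : Matrix (Fin n) (Fin m) ℝ)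
    (C : Matrix (Fin p) (Fin n) ℝ) (D : Matrix (Fin p) (Fin m) ℝ) : ℕ → Set (Fin n → ℝ)
  | 0 => {0}
  | (i + 1) => {x | ∃ w α, w ∈ strongRec A B C D i ∧ C.mulVec w + D.mulVec α = 0 ∧
      x = A.mulVec w + B.mulVec α}

/-! Write a vector `v` on the column blocks of `M_{k+1}` as `(α, w)`, with `α` its block `0` and
`w` the blocks `1, …, k`. Then `[B AB … A^k B] v = B α + A [B … A^{k-1} B] w`, and `M_{k+1}` has the
block form `[[0, M_k], [D, C [B … A^{k-1} B]]]` (the first `k` block rows, then the last one), so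
`M_{k+1} v = 0` says exactly that `w ∈ ker M_k` and `C w' + D α = 0` for `w' = [B … A^{k-1} B] w`.
By induction, `w'` ranges over `R_k`, and the recursion step is matched term by term. -/

section BlockCons

variable {R κ : Type*} {k : ℕ}

def blockCons (α : κ → R) (w : Fin k × κ → R) : Fin (k + 1) × κ → R :=
  fun jc => Fin.cases (α jc.2) (fun j => w (j, jc.2)) jc.1

@[simp] lemma blockCons_zero (α : κ → R) (w : Fin k × κ → R) (c : κ) :
    blockCons α w (0, c) = α c := rfl

@[simp] lemma blockCons_succ (α : κ → R) (w : Fin k × κ → R) (j : Fin k) (c : κ) :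
    blockCons α w (j.succ, c) = w (j, c) := rfl

lemma blockCons_surjective :
    Function.Surjective fun αw : (κ → R) × (Fin k × κ → R) => blockCons αw.1 αw.2 := by
  intro v
  refine ⟨(fun c => v (0, c), fun jc => v (jc.1.succ, jc.2)), funext fun ⟨j, c⟩ => ?_⟩
  cases j using Fin.cases <;> rfl

lemma exists_eq_blockCons_iff {P : (Fin (k + 1) × κ → R) → Prop} :
    (∃ v, P v) ↔ ∃ α w, P (blockCons α w) := by
  rw [blockCons_surjective.exists, Prod.exists]

end BlockCons

section Controllability

variable {R ι κ : Type*} [Semiring R] [Fintype ι] [DecidableEq ι] [Fintype κ]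

def ctrbMatrix (A : Matrix ι ι R) (B : Matrix ι κ R) (k : ℕ) : Matrix ι (Fin k × κ) R :=
  of fun r jc => (A ^ (jc.1 : ℕ) * B) r jc.2

lemma ctrbMatrix_mulVec (A : Matrix ι ι R) (B : Matrix ι κ R) {k : ℕ} (w : Fin k × κ → R) :
    ctrbMatrix A B k *ᵥ w = ∑ j : Fin k, (A ^ (j : ℕ) * B) *ᵥ fun c => w (j, c) := by
  ext r
  simp only [mulVec, dotProduct, Fintype.sum_prod_type, Finset.sum_apply, ctrbMatrix, of_apply]

lemma ctrbMatrix_succ_mulVec_blockCons (A : Matrix ι ι R) (B : Matrix ι κ R) {k : ℕ}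
    (α : κ → R) (w : Fin k × κ → R) :
    ctrbMatrix A B (k + 1) *ᵥ blockCons α w = B *ᵥ α + A *ᵥ (ctrbMatrix A B k *ᵥ w) := by
  simp only [ctrbMatrix_mulVec, Fin.sum_univ_succ, mulVec_sum, mulVec_mulVec, Fin.val_zero,
    Fin.val_succ, pow_zero, Matrix.one_mul, pow_succ', Matrix.mul_assoc, blockCons_zero,
    blockCons_succ]

end Controllability

section Markov

variable {n m p : ℕ} (A : Matrix (Fin n) (Fin n) ℝ) (B : Matrix (Fin n) (Fin m) ℝ)
  (C : Matrix (Fin p) (Fin n) ℝ) (D : Matrix (Fin p) (Fin m) ℝ) {k : ℕ}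

lemma markov_succ_castSucc_zero (r : Fin k) (row : Fin p) (c : Fin m) :
    Markov A B C D (k + 1) (r.castSucc, row) (0, c) = 0 :=
  if_pos (by simp)

lemma markov_succ_castSucc_succ (r : Fin k) (row : Fin p) (j : Fin k) (c : Fin m) :
    Markov A B C D (k + 1) (r.castSucc, row) (j.succ, c) = Markov A B C D k (r, row) (j, c) := by
  simp only [Markov, Fin.val_castSucc, Fin.val_succ]
  rw [show (r : ℕ) + (j + 1) - (k + 1) = r + j - k by omega]
  split_ifs <;> first | rfl | omega

lemma markov_succ_last_zero (row : Fin p) (c : Fin m) :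
    Markov A B C D (k + 1) (Fin.last k, row) (0, c) = D row c := by
  simp [Markov]

lemma markov_succ_last_succ (row : Fin p) (j : Fin k) (c : Fin m) :
    Markov A B C D (k + 1) (Fin.last k, row) (j.succ, c) = (C * A ^ (j : ℕ) * B) row c := by
  simp only [Markov, Fin.val_last, Fin.val_succ]
  rw [show k + (j + 1) - (k + 1) = j by omega]
  split_ifs <;> first | rfl | omega

lemma markov_succ_mulVec_blockCons_castSucc (α : Fin m → ℝ) (w : Fin k × Fin m → ℝ)
    (r : Fin k) (row : Fin p) :
    (Markov A B C D (k + 1) *ᵥ blockCons α w) (r.castSucc, row)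
      = (Markov A B C D k *ᵥ w) (r, row) := by
  simp [mulVec, dotProduct, Fintype.sum_prod_type, Fin.sum_univ_succ,
    markov_succ_castSucc_zero, markov_succ_castSucc_succ]

lemma markov_succ_mulVec_blockCons_last (α : Fin m → ℝ) (w : Fin k × Fin m → ℝ) (row : Fin p) :
    (Markov A B C D (k + 1) *ᵥ blockCons α w) (Fin.last k, row)
      = (C *ᵥ (ctrbMatrix A B k *ᵥ w) + D *ᵥ α) row := by
  rw [ctrbMatrix_mulVec, mulVec_sum]
  simp only [mulVec_mulVec, ← Matrix.mul_assoc]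
  simp [mulVec, dotProduct, Fintype.sum_prod_type, Fin.sum_univ_succ,
    markov_succ_last_zero, markov_succ_last_succ, add_comm]

lemma markov_succ_mulVec_blockCons_eq_zero_iff (α : Fin m → ℝ) (w : Fin k × Fin m → ℝ) :
    Markov A B C D (k + 1) *ᵥ blockCons α w = 0 ↔
      Markov A B C D k *ᵥ w = 0 ∧ C *ᵥ (ctrbMatrix A B k *ᵥ w) + D *ᵥ α = 0 := by
  simp only [funext_iff, Prod.forall, Fin.forall_fin_succ' (P := fun r => ∀ row, _ = _),
    markov_succ_mulVec_blockCons_castSucc, markov_succ_mulVec_blockCons_last, Pi.zero_apply]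

end Markov

theorem strongRec_eq_ctrbMatrix_image_ker {n m p : ℕ} (A : Matrix (Fin n) (Fin n) ℝ)
    (B : Matrix (Fin n) (Fin m) ℝ) (C : Matrix (Fin p) (Fin n) ℝ) (D : Matrix (Fin p) (Fin m) ℝ)
    (i : ℕ) :
    strongRec A B C D i =
      {x | ∃ v, Markov A B C D i *ᵥ v = 0 ∧ x = ctrbMatrix A B i *ᵥ v} := by
  induction i with
  | zero =>
    ext x
    simp only [strongRec, Set.mem_singleton_iff, Set.mem_ofPred_eq]
    refine ⟨fun hx => ⟨0, Subsingleton.elim _ _, by rw [hx, mulVec_zero]⟩, ?_⟩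
    rintro ⟨v, -, rfl⟩
    rw [Subsingleton.elim v 0, mulVec_zero]
  | succ k ih =>
    ext x
    simp only [strongRec, ih, Set.mem_ofPred_eq, exists_eq_blockCons_iff,
      markov_succ_mulVec_blockCons_eq_zero_iff, ctrbMatrix_succ_mulVec_blockCons]
    constructor
    · rintro ⟨-, α, ⟨w, hw, rfl⟩, hCD, rfl⟩
      exact ⟨α, w, ⟨hw, hCD⟩, add_comm _ _⟩
    · rintro ⟨α, w, ⟨hw, hCD⟩, rfl⟩
      exact ⟨_, α, ⟨w, hw, rfl⟩, hCD, add_comm _ _⟩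

/-- For every `i ≥ 1`, the `i`-th step of the strong-reachability recursion
equals `[B AB … A^{i-1}B](ker Mᵢ)`, where `Mᵢ` is the Markov parameter
matrix. -/
theorem strongRec_eq_ctrb_kernel {n m p : ℕ} (A : Matrix (Fin n) (Fin n) ℝ)
    (B : Matrix (Fin n) (Fin m) ℝ) (C : Matrix (Fin p) (Fin n) ℝ)
    (D : Matrix (Fin p) (Fin m) ℝ) :
    ∀ i : ℕ, 1 ≤ i →
      strongRec A B C D i =
        {x | ∃ v : Fin i × Fin m → ℝ, (Markov A B C D i).mulVec v = 0 ∧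
          x = (Matrix.of fun (r : Fin n) (jc : Fin i × Fin m) =>
                (A ^ (jc.1 : ℕ) * B) r jc.2).mulVec v} :=
  fun i _ => strongRec_eq_ctrbMatrix_image_ker A B C D i
end

section
/- With M_k the Markov parameter matrix and ker M_{f-d+1} = ker M_{f-d+2} in the stabilized regime (where d = dim ker D and f = dim ker M_{f-d+1}), the map v ↦ [B AB ... A^{f-d}B] v restricted to ker M_{f-d+1} is injective. Consequently, the strongly reachable subspace R_s = [B AB ... A^{f-d}B](ker M_{f-d+1}) has dimension f. -/
open Matrix

/-!
Appending a zero block to a kernel vector of `M_{k+1}` gives a kernel vector of `M_{k+2}`; when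
both kernels have the same dimension this is onto, so every kernel vector of `M_{k+2}` has a
vanishing last block. If `v ∈ ker M_{k+1}` is also killed by `[B AB … A^k B]`, then prepending a
zero block to `v` gives a kernel vector of `M_{k+2}` too, because the new last block row is
`C [B AB … A^k B] v = 0`. Hence the last block of `v` vanishes and the shifted vector
`(0, v_0, …, v_{k-1})` again lies in both kernels (the controllability matrix maps it to `A` times
the image of `v`). Reverse induction on the block index gives `v = 0`: the controllability matrix
is injective on `ker M_{k+1}`, which also yields the dimension of its image.
-/

theorem Matrix.mulVec_extend_zero {R α β ι : Type*} [NonUnitalNonAssocSemiring R] [Fintype α]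
    [Fintype β] {s : α → β} (hs : Function.Injective s) (M : Matrix ι β R) (v : α → R) :
    M *ᵥ Function.extend s v 0 = M.submatrix id s *ᵥ v := by
  ext i
  simp only [mulVec, dotProduct, submatrix_apply, id]
  rw [← Finset.sum_subset (Finset.subset_univ (Finset.univ.map ⟨s, hs⟩)), Finset.sum_map]
  · simp [hs.extend_apply]
  · intro b _ hb
    rw [Function.extend_apply', Pi.zero_apply, mul_zero]
    simpa using hb

theorem Function.extend_prodMap_id_apply {α β γ δ : Type*} {s : α → β}
    (hs : Function.Injective s) (v : α × γ → δ) (e : β × γ → δ) (a : α) (c : γ) :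
    Function.extend (Prod.map s id) v e (s a, c) = v (a, c) :=
  (hs.prodMap Function.injective_id).extend_apply v e (a, c)

theorem Function.extend_prodMap_id_apply_of_notMem {α β γ δ : Type*} {s : α → β} {b : β}
    (hb : b ∉ Set.range s) (v : α × γ → δ) (e : β × γ → δ) (c : γ) :
    Function.extend (Prod.map s id) v e (b, c) = e (b, c) :=
  Function.extend_apply' _ _ _ fun ⟨⟨a, _⟩, h⟩ => hb ⟨a, congrArg Prod.fst h⟩

section Controllability

variable {R ι β : Type*} [Semiring R] [Fintype ι] [DecidableEq ι]

def controllabilityMatrix (A : Matrix ι ι R) (B : Matrix ι β R) (k : ℕ) :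
    Matrix ι (Fin k × β) R :=
  of fun r jc => (A ^ (jc.1 : ℕ) * B) r jc.2

variable (A : Matrix ι ι R) (B : Matrix ι β R)

theorem mul_controllabilityMatrix {κ : Type*} (C : Matrix κ ι R) (k : ℕ) :
    C * controllabilityMatrix A B k = of fun r jc => (C * A ^ (jc.1 : ℕ) * B) r jc.2 := by
  ext r ⟨j, c⟩
  simp only [of_apply, Matrix.mul_assoc]
  rfl

theorem controllabilityMatrix_mulVec [Fintype β] {k : ℕ} (v : Fin k × β → R) :
    controllabilityMatrix A B k *ᵥ v =
      ∑ j : Fin k, (A ^ (j : ℕ) * B) *ᵥ fun c => v (j, c) := by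
  ext r
  simp [controllabilityMatrix, mulVec, dotProduct, Fintype.sum_prod_type, Finset.sum_apply]

theorem controllabilityMatrix_mulVec_of_shift [Fintype β] {k : ℕ} {u v : Fin (k + 1) × β → R}
    (hv : ∀ c, v (Fin.last k, c) = 0) (hu : ∀ c, u (0, c) = 0)
    (huv : ∀ (j : Fin k) c, u (j.succ, c) = v (j.castSucc, c)) :
    controllabilityMatrix A B (k + 1) *ᵥ u =
      A *ᵥ (controllabilityMatrix A B (k + 1) *ᵥ v) := by
  have hu' : (fun c => u (0, c)) = 0 := funext hu
  have hv' : (fun c => v (Fin.last k, c)) = 0 := funext hv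
  rw [controllabilityMatrix_mulVec, controllabilityMatrix_mulVec, Fin.sum_univ_succ,
    Fin.sum_univ_castSucc, hu', hv', mulVec_zero, mulVec_zero, zero_add, add_zero, mulVec_sum]
  simp only [huv, mulVec_mulVec, Fin.val_succ, Fin.val_castSucc, pow_succ', Matrix.mul_assoc]

end Controllability

namespace Markov

variable {n m p : ℕ} (A : Matrix (Fin n) (Fin n) ℝ) (B : Matrix (Fin n) (Fin m) ℝ)
    (C : Matrix (Fin p) (Fin n) ℝ) (D : Matrix (Fin p) (Fin m) ℝ)

theorem apply_succ_of_add_eq {k : ℕ} {i j : Fin (k + 1)} {i' j' : Fin k}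
    (h : (i : ℕ) + j = i' + j' + 1) (r : Fin p) (c : Fin m) :
    Markov A B C D (k + 1) (i, r) (j, c) = Markov A B C D k (i', r) (j', c) := by
  simp only [Markov]
  rw [show (i : ℕ) + j - (k + 1) = i' + j' - k by omega]
  split_ifs <;> first | rfl | omega

theorem submatrix_succ_castSucc (k : ℕ) :
    (Markov A B C D (k + 1)).submatrix (Prod.map Fin.succ id) (Prod.map Fin.castSucc id)
      = Markov A B C D k := by
  ext ⟨i, r⟩ ⟨j, c⟩
  exact apply_succ_of_add_eq A B C D (by simp; omega) r c

theorem submatrix_castSucc_succ (k : ℕ) :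
    (Markov A B C D (k + 1)).submatrix (Prod.map Fin.castSucc id) (Prod.map Fin.succ id)
      = Markov A B C D k := by
  ext ⟨i, r⟩ ⟨j, c⟩
  exact apply_succ_of_add_eq A B C D (by simp; omega) r c

theorem submatrix_zero_castSucc (k : ℕ) :
    (Markov A B C D (k + 1)).submatrix (fun r => (0, r)) (Prod.map Fin.castSucc id) = 0 := by
  ext r ⟨j, c⟩
  simp [Markov]

theorem submatrix_last_succ (k : ℕ) :
    (Markov A B C D (k + 1)).submatrix (fun r => (Fin.last k, r)) (Prod.map Fin.succ id)
      = C * controllabilityMatrix A B k := by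
  ext r ⟨j, c⟩
  simp [Markov, mul_controllabilityMatrix, show k + (j + 1) - (k + 1) = j by omega]

-- Zero padding of block vectors is `Function.extend _ v 0` along `Prod.map Fin.castSucc id`
-- (a zero block appended) or along `Prod.map Fin.succ id` (a zero block prepended).
theorem mulVec_extend_castSucc_eq_zero {k : ℕ} {v : Fin k × Fin m → ℝ}
    (hv : Markov A B C D k *ᵥ v = 0) :
    Markov A B C D (k + 1) *ᵥ Function.extend (Prod.map Fin.castSucc id) v 0 = 0 := by
  rw [mulVec_extend_zero ((Fin.castSucc_injective k).prodMap Function.injective_id)]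
  ext ⟨i, r⟩
  cases i using Fin.cases with
  | zero =>
    change ((Markov A B C D (k + 1)).submatrix _ (Prod.map Fin.castSucc id) *ᵥ v) r = 0
    rw [submatrix_zero_castSucc, zero_mulVec]
    rfl
  | succ i =>
    change ((Markov A B C D (k + 1)).submatrix (Prod.map Fin.succ id) _ *ᵥ v) (i, r) = 0
    rw [submatrix_succ_castSucc, hv]
    rfl

theorem mulVec_extend_succ_eq_zero {k : ℕ} {v : Fin k × Fin m → ℝ}
    (hv : Markov A B C D k *ᵥ v = 0) (hc : controllabilityMatrix A B k *ᵥ v = 0) :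
    Markov A B C D (k + 1) *ᵥ Function.extend (Prod.map Fin.succ id) v 0 = 0 := by
  rw [mulVec_extend_zero ((Fin.succ_injective k).prodMap Function.injective_id)]
  ext ⟨i, r⟩
  cases i using Fin.lastCases with
  | last =>
    change ((Markov A B C D (k + 1)).submatrix _ (Prod.map Fin.succ id) *ᵥ v) r = 0
    rw [submatrix_last_succ, ← mulVec_mulVec, hc, mulVec_zero]
    rfl
  | cast i =>
    change ((Markov A B C D (k + 1)).submatrix (Prod.map Fin.castSucc id) _ *ᵥ v) (i, r) = 0
    rw [submatrix_castSucc_succ, hv]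
    rfl

theorem ker_succ_eq_map_extend {k : ℕ}
    (h : Module.finrank ℝ (LinearMap.ker (Markov A B C D (k + 1)).mulVecLin)
      = Module.finrank ℝ (LinearMap.ker (Markov A B C D k).mulVecLin)) :
    LinearMap.ker (Markov A B C D (k + 1)).mulVecLin
      = (LinearMap.ker (Markov A B C D k).mulVecLin).map
          (Function.ExtendByZero.linearMap ℝ (Prod.map Fin.castSucc (id : Fin m → Fin m))) := by
  have hinj := Function.extend_injective
    ((Fin.castSucc_injective k).prodMap (Function.injective_id (α := Fin m)))
    (0 : Fin (k + 1) × Fin m → ℝ)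
  refine (Submodule.eq_of_le_of_finrank_eq ?_ ?_).symm
  · rintro _ ⟨v, hv, rfl⟩
    exact mulVec_extend_castSucc_eq_zero A B C D hv
  · rw [h, LinearEquiv.finrank_eq
      (Submodule.equivMapOfInjective (Function.ExtendByZero.linearMap ℝ _) hinj _)]

theorem last_eq_zero_and_exists_shift {k : ℕ}
    (h : Module.finrank ℝ (LinearMap.ker (Markov A B C D (k + 2)).mulVecLin)
      = Module.finrank ℝ (LinearMap.ker (Markov A B C D (k + 1)).mulVecLin))
    {v : Fin (k + 1) × Fin m → ℝ} (hv : Markov A B C D (k + 1) *ᵥ v = 0)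
    (hc : controllabilityMatrix A B (k + 1) *ᵥ v = 0) :
    (∀ c, v (Fin.last k, c) = 0) ∧
      ∃ u, Markov A B C D (k + 1) *ᵥ u = 0 ∧ controllabilityMatrix A B (k + 1) *ᵥ u = 0 ∧
        ∀ (j : Fin k) c, u (j.succ, c) = v (j.castSucc, c) := by
  set w := Function.extend (Prod.map Fin.succ id) v 0 with hw_def
  have hw : w ∈ LinearMap.ker (Markov A B C D (k + 2)).mulVecLin :=
    mulVec_extend_succ_eq_zero A B C D hv hc
  rw [ker_succ_eq_map_extend A B C D h] at hw
  obtain ⟨u, hu, huw⟩ := hw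
  have hu_eq : ∀ j c, u (j, c) = w (j.castSucc, c) := fun j c => by
    rw [← huw, Function.ExtendByZero.linearMap_apply,
      Function.extend_prodMap_id_apply (Fin.castSucc_injective _)]
  have hv_eq : ∀ j c, v (j, c) = w (j.succ, c) := fun j c =>
    (Function.extend_prodMap_id_apply (Fin.succ_injective _) _ _ _ _).symm
  have hv_last : ∀ c, v (Fin.last k, c) = 0 := fun c => by
    rw [hv_eq, Fin.succ_last, ← huw, Function.ExtendByZero.linearMap_apply,
      Function.extend_prodMap_id_apply_of_notMem (by simp [Fin.range_castSucc]), Pi.zero_apply]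
  have hu_zero : ∀ c, u (0, c) = 0 := fun c => by
    rw [hu_eq, Fin.castSucc_zero, hw_def,
      Function.extend_prodMap_id_apply_of_notMem (by simp [Fin.range_succ]), Pi.zero_apply]
  have hu_succ : ∀ (j : Fin k) c, u (j.succ, c) = v (j.castSucc, c) := fun j c => by
    rw [hu_eq, hv_eq, Fin.succ_castSucc]
  refine ⟨hv_last, u, hu, ?_, hu_succ⟩
  rw [controllabilityMatrix_mulVec_of_shift A B hv_last hu_zero hu_succ, hc, mulVec_zero]

theorem eq_zero_of_mulVec_eq_zero_of_controllabilityMatrix_mulVec_eq_zero {k : ℕ}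
    (h : Module.finrank ℝ (LinearMap.ker (Markov A B C D (k + 2)).mulVecLin)
      = Module.finrank ℝ (LinearMap.ker (Markov A B C D (k + 1)).mulVecLin))
    {v : Fin (k + 1) × Fin m → ℝ} (hv : Markov A B C D (k + 1) *ᵥ v = 0)
    (hc : controllabilityMatrix A B (k + 1) *ᵥ v = 0) : v = 0 := by
  suffices key : ∀ j : Fin (k + 1), ∀ v, Markov A B C D (k + 1) *ᵥ v = 0 →
      controllabilityMatrix A B (k + 1) *ᵥ v = 0 → ∀ c, v (j, c) = 0 from
    funext fun jc => key jc.1 v hv hc jc.2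
  intro j
  induction j using Fin.reverseInduction with
  | last => exact fun v hv hc => (last_eq_zero_and_exists_shift A B C D h hv hc).1
  | cast j ih =>
    intro v hv hc c
    obtain ⟨-, u, hu, hcu, huv⟩ := last_eq_zero_and_exists_shift A B C D h hv hc
    rw [← huv]
    exact ih u hu hcu c

end Markov

theorem fast_space_dimension_general {n m p f d : ℕ}
    (A : Matrix (Fin n) (Fin n) ℝ) (B : Matrix (Fin n) (Fin m) ℝ)
    (C : Matrix (Fin p) (Fin n) ℝ) (D : Matrix (Fin p) (Fin m) ℝ)
    (h1 : Module.finrank ℝ (LinearMap.ker (Markov A B C D (f - d + 1)).mulVecLin) = f)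
    (h2 : Module.finrank ℝ (LinearMap.ker (Markov A B C D (f - d + 2)).mulVecLin) = f) :
    let ctrb : Matrix (Fin n) (Fin (f - d + 1) × Fin m) ℝ :=
      Matrix.of fun r jc => (A ^ (jc.1 : ℕ) * B) r jc.2
    (∀ v : Fin (f - d + 1) × Fin m → ℝ,
        (Markov A B C D (f - d + 1)).mulVec v = 0 → ctrb.mulVec v = 0 → v = 0) ∧
    Module.finrank ℝ
      (Submodule.map ctrb.mulVecLin
        (LinearMap.ker (Markov A B C D (f - d + 1)).mulVecLin)) = f := by
  intro ctrb
  have hinj : ∀ v : Fin (f - d + 1) × Fin m → ℝ,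
      (Markov A B C D (f - d + 1)).mulVec v = 0 → ctrb.mulVec v = 0 → v = 0 :=
    fun _ hv hc => Markov.eq_zero_of_mulVec_eq_zero_of_controllabilityMatrix_mulVec_eq_zero
      A B C D (h2.trans h1.symm) hv hc
  refine ⟨hinj, ?_⟩
  have hdisj : Disjoint (LinearMap.ker (Markov A B C D (f - d + 1)).mulVecLin)
      (LinearMap.ker ctrb.mulVecLin) :=
    LinearMap.disjoint_ker.2 hinj
  rw [← LinearMap.range_domRestrict,
    LinearMap.finrank_range_of_inj (LinearMap.injective_domRestrict_iff.2 hdisj), h1]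

/-- In the stabilized regime `dim ker M_{f-d+1} = dim ker M_{f-d+2} = f`
(with `d = dim ker D`), the map `v ↦ [B AB … A^{f-d}B] v` is injective on
`ker M_{f-d+1}`; consequently the strongly reachable subspace
`R_s = [B AB … A^{f-d}B](ker M_{f-d+1})` has dimension `f`. -/
theorem fast_space_dimension {n m p f d : ℕ}
    (A : Matrix (Fin n) (Fin n) ℝ) (B : Matrix (Fin n) (Fin m) ℝ)
    (C : Matrix (Fin p) (Fin n) ℝ) (D : Matrix (Fin p) (Fin m) ℝ)
    (hd : Module.finrank ℝ (LinearMap.ker D.mulVecLin) = d)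
    (h1 : Module.finrank ℝ (LinearMap.ker (Markov A B C D (f - d + 1)).mulVecLin) = f)
    (h2 : Module.finrank ℝ (LinearMap.ker (Markov A B C D (f - d + 2)).mulVecLin) = f) :
    let ctrb : Matrix (Fin n) (Fin (f - d + 1) × Fin m) ℝ :=
      Matrix.of fun r jc => (A ^ (jc.1 : ℕ) * B) r jc.2
    (∀ v : Fin (f - d + 1) × Fin m → ℝ,
        (Markov A B C D (f - d + 1)).mulVec v = 0 → ctrb.mulVec v = 0 → v = 0) ∧
    Module.finrank ℝ
      (Submodule.map ctrb.mulVecLin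
        (LinearMap.ker (Markov A B C D (f - d + 1)).mulVecLin)) = f :=
  fast_space_dimension_general A B C D h1 h2
end

section
/- Let G(s) ∈ ℝ(s)^{p×m} be left-invertible over ℝ(s) and let G_sq(s) ∈ ℝ(s)^{m×m} be any rational matrix satisfying G(-s)^T G(s) = G_sq(-s)^T G_sq(s). Then for every vector polynomial U(s) ∈ ℝ[s]^m, G(s)U(s) is strictly proper if and only if G_sq(s)U(s) is strictly proper. -/
open Matrix Polynomial

/-- The substitution `s ↦ -s` on a real rational function `r`,
given by `r(-s) = num(-s)/denom(-s)`. -/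
noncomputable def negs (r : RatFunc ℝ) : RatFunc ℝ :=
  algebraMap (Polynomial ℝ) (RatFunc ℝ) (r.num.comp (-Polynomial.X)) /
    algebraMap (Polynomial ℝ) (RatFunc ℝ) (r.denom.comp (-Polynomial.X))

/-!
Clear denominators: `vᵢ = wᵢ / d` with polynomials `wᵢ, d`, so that
`∑ᵢ vᵢ(-s) vᵢ(s) = (∑ᵢ wᵢ(-s) wᵢ(s)) / (d(-s) d(s))`. If `N = maxᵢ deg wᵢ`, the coefficient of
`s^{2N}` in the numerator is `(-1)^N ∑ᵢ (coeff wᵢ N)²`, a nonzero sum of squares, so the numerator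
has degree exactly `2N`. Hence the sum is strictly proper iff every `vᵢ` is. For `v = G U` the sum
is `U(-s)ᵀ G(-s)ᵀ G(s) U(s)`, which only depends on `G(-s)ᵀ G(s) = G_sq(-s)ᵀ G_sq(s)`.
-/

namespace Polynomial

variable {K : Type*}

theorem coeff_comp_neg_X [CommRing K] (w : K[X]) (n : ℕ) :
    (w.comp (-X)).coeff n = (-1) ^ n * w.coeff n := by
  induction w using Polynomial.induction_on' with
  | add p q hp hq => simp only [add_comp, coeff_add, hp, hq, mul_add]
  | monomial k a =>
    rw [← C_mul_X_pow_eq_monomial, mul_comp, C_comp, X_pow_comp, neg_pow, ← C_1, ← C_neg, ← C_pow,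
      ← mul_assoc, ← C_mul, coeff_C_mul_X_pow, coeff_C_mul_X_pow]
    split_ifs with h
    · rw [h, mul_comm]
    · rw [mul_zero]

theorem coeff_comp_neg_X_mul_self [CommRing K] {w : K[X]} {n : ℕ} (hw : w.natDegree ≤ n) :
    (w.comp (-X) * w).coeff (n + n) = (-1) ^ n * w.coeff n ^ 2 := by
  rw [coeff_mul_add_eq_of_natDegree_le ((natDegree_eq_of_degree_eq degree_comp_neg_X).le.trans hw)
    hw, coeff_comp_neg_X]
  ring

theorem natDegree_comp_neg_X_mul_self_le [CommRing K] (w : K[X]) :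
    (w.comp (-X) * w).natDegree ≤ w.natDegree + w.natDegree :=
  natDegree_mul_le_of_le (natDegree_eq_of_degree_eq degree_comp_neg_X).le le_rfl

variable [Field K] [LinearOrder K] [IsStrictOrderedRing K] {ι : Type*} [Fintype ι]

theorem le_degree_sum_comp_neg_X_mul_self {w : ι → K[X]} {k : ι} (hk : w k ≠ 0)
    (hmax : ∀ i, (w i).natDegree ≤ (w k).natDegree) :
    ((w k).natDegree + (w k).natDegree : ℕ) ≤ (∑ i, (w i).comp (-X) * w i).degree := by
  set N := (w k).natDegree
  have hsq : 0 < ∑ i, (w i).coeff N ^ 2 :=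
    Finset.sum_pos' (fun i _ => sq_nonneg _)
      ⟨k, Finset.mem_univ k, sq_pos_of_ne_zero (leadingCoeff_ne_zero.mpr hk)⟩
  apply le_degree_of_ne_zero
  rw [finsetSum_coeff, Finset.sum_congr rfl fun i _ => coeff_comp_neg_X_mul_self (hmax i),
    ← Finset.mul_sum]
  exact mul_ne_zero (pow_ne_zero _ (neg_ne_zero.mpr one_ne_zero)) hsq.ne'

theorem degree_sum_comp_neg_X_mul_self_lt_iff (w : ι → K[X]) (n : ℕ) :
    (∑ i, (w i).comp (-X) * w i).degree < (n + n : ℕ) ↔ ∀ i, (w i).degree < n := by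
  constructor
  · contrapose!
    rintro ⟨j, hj⟩
    obtain ⟨k, -, hk⟩ := Finset.exists_max_image Finset.univ (fun i => (w i).degree)
      ⟨j, Finset.mem_univ j⟩
    have hnk : (n : WithBot ℕ) ≤ (w k).degree := hj.trans (hk j (Finset.mem_univ j))
    have hk0 : w k ≠ 0 := by
      rintro h
      simp [h] at hnk
    have hn : n ≤ (w k).natDegree := by
      rwa [degree_eq_natDegree hk0, Nat.cast_le] at hnk
    calc ((n + n : ℕ) : WithBot ℕ) ≤ ((w k).natDegree + (w k).natDegree : ℕ) := by
          exact_mod_cast (by omega)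
      _ ≤ _ := le_degree_sum_comp_neg_X_mul_self hk0 fun i =>
          natDegree_le_natDegree (hk i (Finset.mem_univ i))
  · intro hw
    refine (degree_sum_le _ _).trans_lt ((Finset.sup_lt_iff (WithBot.bot_lt_coe _)).mpr ?_)
    intro i _
    rcases eq_or_ne (w i) 0 with h | h
    · simp [h]
    have hi : (w i).natDegree < n := (natDegree_lt_iff_degree_lt h).mpr (hw i)
    refine degree_le_natDegree.trans_lt ?_
    exact_mod_cast (natDegree_comp_neg_X_mul_self_le (w i)).trans_lt (by omega)

end Polynomial

namespace RatFunc

variable (K : Type*) [Field K]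

noncomputable def compNegX : RatFunc K →+* RatFunc K :=
  mapRingHom (compRingHom (-Polynomial.X : K[X])) fun p hp => by
    rw [Submonoid.mem_comap, coe_compRingHom_apply]
    exact mem_nonZeroDivisors_of_ne_zero
      (comp_neg_X_eq_zero_iff.not.mpr (nonZeroDivisors.ne_zero hp))

variable {K}

theorem compNegX_div (p q : K[X]) :
    compNegX K (algebraMap _ _ p / algebraMap _ _ q) =
      algebraMap _ _ (p.comp (-Polynomial.X)) / algebraMap _ _ (q.comp (-Polynomial.X)) := by
  rw [compNegX, coe_mapRingHom_eq_coe_map, map_apply_div, coe_compRingHom_apply,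
    coe_compRingHom_apply]

theorem sum_compNegX_mul_self_div {ι : Type*} [Fintype ι] (w : ι → K[X]) (d : K[X]) :
    ∑ i, compNegX K (algebraMap _ _ (w i) / algebraMap _ _ d) *
        (algebraMap _ _ (w i) / algebraMap _ _ d) =
      algebraMap _ _ (∑ i, (w i).comp (-Polynomial.X) * w i) /
        algebraMap _ _ (d.comp (-Polynomial.X) * d) := by
  simp only [compNegX_div, div_mul_div_comm, ← map_mul, ← Finset.sum_div, ← map_sum]

theorem exists_eq_div_common_denom {ι : Type*} [Finite ι] (v : ι → RatFunc K) :
    ∃ (w : ι → K[X]) (d : K[X]), d ≠ 0 ∧ ∀ i, v i = algebraMap _ _ (w i) / algebraMap _ _ d := by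
  obtain ⟨⟨d, hd⟩, hw⟩ := IsLocalization.exist_integer_multiples_of_finite (nonZeroDivisors K[X]) v
  choose w hw using hw
  refine ⟨w, d, nonZeroDivisors.ne_zero hd, fun i => ?_⟩
  rw [eq_div_iff (algebraMap_ne_zero (nonZeroDivisors.ne_zero hd)), hw i, Algebra.smul_def,
    mul_comm]

end RatFunc

theorem negs_eq_compNegX : negs = RatFunc.compNegX ℝ :=
  funext fun r => by rw [negs, ← RatFunc.compNegX_div, RatFunc.num_div_denom]

theorem strictlyProper_div_iff {p q : ℝ[X]} (hq : q ≠ 0) :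
    StrictlyProper (algebraMap _ _ p / algebraMap _ _ q) ↔ p.degree < q.degree := by
  set r : RatFunc ℝ := algebraMap _ _ p / algebraMap _ _ q with hr
  rcases eq_or_ne p 0 with rfl | hp
  · simp [r, StrictlyProper, bot_lt_iff_ne_bot, hq]
  have hr0 : r ≠ 0 := div_ne_zero (RatFunc.algebraMap_ne_zero hp) (RatFunc.algebraMap_ne_zero hq)
  have hcross : r.num * q = p * r.denom := (RatFunc.num_mul_eq_mul_denom_iff hq).mpr hr
  have hdeg := congrArg natDegree hcross
  rw [natDegree_mul (RatFunc.num_ne_zero hr0) hq, natDegree_mul hp r.denom_ne_zero] at hdeg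
  rw [StrictlyProper, degree_eq_natDegree (RatFunc.num_ne_zero hr0),
    degree_eq_natDegree r.denom_ne_zero, degree_eq_natDegree hp, degree_eq_natDegree hq,
    Nat.cast_lt, Nat.cast_lt]
  omega

theorem strictlyProper_sum_compNegX_mul_self_iff {ι : Type*} [Fintype ι] (v : ι → RatFunc ℝ) :
    StrictlyProper (∑ i, RatFunc.compNegX ℝ (v i) * v i) ↔ ∀ i, StrictlyProper (v i) := by
  obtain ⟨w, d, hd, hv⟩ := RatFunc.exists_eq_div_common_denom v
  obtain rfl : v = _ := funext hv
  have hdd : d.comp (-X) * d ≠ 0 := mul_ne_zero (comp_neg_X_eq_zero_iff.not.mpr hd) hd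
  have hdeg : (d.comp (-X) * d).degree = (d.natDegree + d.natDegree : ℕ) := by
    rw [degree_mul, degree_comp_neg_X, degree_eq_natDegree hd, Nat.cast_add]
  simp only [RatFunc.sum_compNegX_mul_self_div, strictlyProper_div_iff hdd,
    strictlyProper_div_iff hd, hdeg, degree_eq_natDegree hd,
    degree_sum_comp_neg_X_mul_self_lt_iff]

theorem Matrix.sum_map_mulVec_mul_mulVec {R m n : Type*} [CommRing R] [Fintype m] [Fintype n]
    (σ : R →+* R) (A : Matrix m n R) (u : n → R) :
    ∑ i, σ ((A *ᵥ u) i) * (A *ᵥ u) i = (σ ∘ u) ⬝ᵥ (((A.map σ)ᵀ * A) *ᵥ u) := by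
  rw [← mulVec_mulVec, mulVec_transpose, dotProduct_comm, ← dotProduct_mulVec, dotProduct_comm]
  simp only [dotProduct, RingHom.map_mulVec]

theorem squared_system_same_admissible_general {p m : ℕ}
    (G : Matrix (Fin p) (Fin m) (RatFunc ℝ)) (Gsq : Matrix (Fin m) (Fin m) (RatFunc ℝ))
    (heq : (G.map negs).transpose * G = (Gsq.map negs).transpose * Gsq)
    (U : Fin m → Polynomial ℝ) :
    (∀ i, StrictlyProper
        ((G.mulVec fun j => algebraMap (Polynomial ℝ) (RatFunc ℝ) (U j)) i)) ↔
    (∀ i, StrictlyProper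
        ((Gsq.mulVec fun j => algebraMap (Polynomial ℝ) (RatFunc ℝ) (U j)) i)) := by
  rw [negs_eq_compNegX] at heq
  simp only [← strictlyProper_sum_compNegX_mul_self_iff, Matrix.sum_map_mulVec_mul_mulVec, heq]

/-- If `G(s)` is left-invertible over `ℝ(s)` and `G_sq(s)` satisfies
`G(-s)ᵀ G(s) = G_sq(-s)ᵀ G_sq(s)`, then for every vector polynomial `U(s)`,
`G(s)U(s)` is strictly proper iff `G_sq(s)U(s)` is strictly proper. -/
theorem squared_system_same_admissible {p m : ℕ}
    (G : Matrix (Fin p) (Fin m) (RatFunc ℝ)) (Gsq : Matrix (Fin m) (Fin m) (RatFunc ℝ))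
    (hleft : ∃ H : Matrix (Fin m) (Fin p) (RatFunc ℝ), H * G = 1)
    (heq : (G.map negs).transpose * G = (Gsq.map negs).transpose * Gsq)
    (U : Fin m → Polynomial ℝ) :
    (∀ i, StrictlyProper
        ((G.mulVec fun j => algebraMap (Polynomial ℝ) (RatFunc ℝ) (U j)) i)) ↔
    (∀ i, StrictlyProper
        ((Gsq.mulVec fun j => algebraMap (Polynomial ℝ) (RatFunc ℝ) (U j)) i)) :=
  squared_system_same_admissible_general G Gsq heq U
end
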